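/- Two-sided bound for the Bregman divergence: for every p ∈ (1,∞) there exist constants 0 < c ≤ C such that for all a, b ∈ ℝ with (a,b) ≠ (0,0): c (b−a)² (|b|+|a|)^{p−2} ≤ |b|^p − |a|^p − p a^⟨p−1⟩ (b−a) ≤ C (b−a)² (|b|+|a|)^{p−2}. -/

import Mathlib

open MeasureTheory Real Filter Topology
open scoped ENNReal NNReal

noncomputable section

/-- The signed power `a^⟨k⟩ := |a|^k sgn a` (with `0^k := 0`). -/
def sgnPow (a k : ℝ) : ℝ := |a| ^ k * Real.sign a

/-- The Bregman divergence `F_p(a,b) := |b|^p - |a|^p - p a^⟨p-1⟩ (b-a)`. -/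
def bregmanF (p a b : ℝ) : ℝ := |b| ^ p - |a| ^ p - p * sgnPow a (p - 1) * (b - a)

/-- The constant `A_{d,-α} = 2^α Γ((d+α)/2) π^{-d/2} / |Γ(-α/2)|`. -/
def coefA (d : ℕ) (α : ℝ) : ℝ :=
  2 ^ α * Real.Gamma (((d : ℝ) + α) / 2) * Real.pi ^ (-(d : ℝ) / 2) / |Real.Gamma (-α / 2)|

/-- The kernel `ν(x,y) = A_{d,-α} |x-y|^{-d-α}` of the fractional Laplacian. -/
def nuK (d : ℕ) (α : ℝ) (x y : EuclideanSpace ℝ (Fin d)) : ℝ :=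
  coefA d α * ‖x - y‖ ^ (-(d : ℝ) - α)

/-- The Hardy constant `κ_β`.  Note that `Real.Gamma 0 = 0` and division by `0` is `0`
in Lean, so this formula automatically gives `κ_0 = 0` and `κ_{d-α} = 0`. -/
def kappaC (d : ℕ) (α β : ℝ) : ℝ :=
  2 ^ α * Real.Gamma ((β + α) / 2) * Real.Gamma (((d : ℝ) - β) / 2) /
    (Real.Gamma (β / 2) * Real.Gamma (((d : ℝ) - β - α) / 2))

/-- The Sobolev–Bregman form `E_p[u]`, an element of `[0,∞]`
(the integrand is nonnegative). -/
def formEp (d : ℕ) (α p : ℝ) (u : EuclideanSpace ℝ (Fin d) → ℝ) : ℝ≥0∞ :=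
  (1 / 2) * ∫⁻ x, ∫⁻ y, ENNReal.ofReal
    ((u x - u y) * (sgnPow (u x) (p - 1) - sgnPow (u y) (p - 1)) * nuK d α x y)

/-- The Hardy integral `∫ |u(x)|^p |x|^{-α} dx`, an element of `[0,∞]`. -/
def hardyI (d : ℕ) (α p : ℝ) (u : EuclideanSpace ℝ (Fin d) → ℝ) : ℝ≥0∞ :=
  ∫⁻ x, ENNReal.ofReal (|u x| ^ p * ‖x‖ ^ (-α))

end

lemma sgnPow_zero' (k : ℝ) : sgnPow 0 k = 0 := by simp [sgnPow]

lemma sgnPow_of_pos {a : ℝ} (ha : 0 < a) (k : ℝ) : sgnPow a k = a ^ k := by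
  simp [sgnPow, Real.sign_of_pos ha, abs_of_pos ha]

lemma sgnPow_neg' (a k : ℝ) : sgnPow (-a) k = - sgnPow a k := by
  simp [sgnPow, Real.sign_neg, abs_neg, mul_neg]

lemma sgnPow_of_nonneg {a : ℝ} (ha : 0 ≤ a) {k : ℝ} (hk : 0 < k) : sgnPow a k = a ^ k := by
  rcases ha.lt_or_eq with h | h
  · exact sgnPow_of_pos h k
  · rw [← h, sgnPow_zero', Real.zero_rpow hk.ne']

lemma abs_sgnPow_le (a k : ℝ) : |sgnPow a k| ≤ |a| ^ k := by
  rw [sgnPow, abs_mul, abs_rpow_of_nonneg (abs_nonneg a), abs_abs]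
  rcases lt_trichotomy a 0 with h|h|h <;>
    simp [Real.sign_of_neg, Real.sign_of_pos, h, Real.rpow_nonneg (abs_nonneg a),
      Real.rpow_nonneg (le_refl (0:ℝ))]

lemma continuous_sgnPow {k : ℝ} (hk : 0 < k) : Continuous fun a : ℝ => sgnPow a k := by
  rw [continuous_iff_continuousAt]
  intro a
  rcases lt_trichotomy a 0 with h | h | h
  · have he : (fun x : ℝ => sgnPow x k) =ᶠ[nhds a] fun x => -((-x) ^ k) := by
      filter_upwards [Iio_mem_nhds h] with x hx
      rw [show x = -(-x) by ring, sgnPow_neg', sgnPow_of_pos (by simpa using hx : (0:ℝ) < -x)]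
      ring_nf
    refine ContinuousAt.congr ?_ he.symm
    exact ((Real.continuousAt_rpow_const (-a) k (Or.inl (by simpa using h.ne))).comp
      (continuous_neg.continuousAt)).neg
  · subst h
    have ht : Tendsto (fun x : ℝ => sgnPow x k) (nhds 0) (nhds 0) := by
      apply squeeze_zero_norm (a := fun x : ℝ => |x| ^ k)
        (fun x => by rw [Real.norm_eq_abs]; exact abs_sgnPow_le x k)
      have : Continuous fun x : ℝ => |x| ^ k :=
        continuous_abs.rpow_const fun x => Or.inr hk.le
      simpa [Real.zero_rpow hk.ne'] using this.tendsto 0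
    simpa [ContinuousAt, sgnPow_zero'] using ht
  · have he : (fun x : ℝ => sgnPow x k) =ᶠ[nhds a] fun x => x ^ k := by
      filter_upwards [Ioi_mem_nhds h] with x hx
      exact sgnPow_of_pos hx k
    exact ContinuousAt.congr (Real.continuousAt_rpow_const a k (Or.inl h.ne')) he.symm

lemma strictMono_sgnPow {k : ℝ} (hk : 0 < k) : StrictMono fun a : ℝ => sgnPow a k := by
  have hpos : ∀ x : ℝ, 0 < x → 0 < sgnPow x k := fun x hx => by
    rw [sgnPow_of_pos hx]; exact Real.rpow_pos_of_pos hx k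
  intro x y hxy
  simp only
  rcases le_or_gt 0 x with hx | hx
  · rw [sgnPow_of_nonneg hx hk, sgnPow_of_nonneg (hx.trans hxy.le) hk]
    exact Real.rpow_lt_rpow hx hxy hk
  · rcases le_or_gt 0 y with hy | hy
    · calc sgnPow x k = -sgnPow (-x) k := by rw [sgnPow_neg']; ring
        _ < 0 := by simpa using (hpos (-x) (by linarith))
        _ ≤ sgnPow y k := by rw [sgnPow_of_nonneg hy hk]; exact Real.rpow_nonneg hy k
    · have h1 : sgnPow (-y) k < sgnPow (-x) k := by
        rw [sgnPow_of_pos (by linarith : (0:ℝ) < -y), sgnPow_of_pos (by linarith : (0:ℝ) < -x)]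
        exact Real.rpow_lt_rpow (by linarith) (by linarith) hk
      have h2 := neg_lt_neg h1
      rwa [← sgnPow_neg', ← sgnPow_neg', neg_neg, neg_neg] at h2

lemma sgnPow_hasDerivAt {p : ℝ} (hp : 1 < p) (x : ℝ) :
    HasDerivAt (fun y : ℝ => |y| ^ p) (p * sgnPow x (p - 1)) x := by
  convert hasDerivAt_abs_rpow x hp using 1
  rcases eq_or_ne x 0 with h | h
  · simp [h, sgnPow_zero']
  · have hx : |x| ≠ 0 := abs_ne_zero.2 h
    have : |x| ^ (p - 1) = |x| ^ (p - 2) * |x| := by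
      rw [← Real.rpow_add_one hx (p - 2)]; ring_nf
    rw [sgnPow, this]
    have hsx : |x| * Real.sign x = x := by
      rcases lt_or_gt_of_ne h with hlt | hgt
      · rw [abs_of_neg hlt, Real.sign_of_neg hlt]; ring
      · rw [abs_of_pos hgt, Real.sign_of_pos hgt]; ring
    calc p * (|x| ^ (p - 2) * |x| * Real.sign x) = p * |x| ^ (p - 2) * (|x| * Real.sign x) := by ring
      _ = p * |x| ^ (p - 2) * x := by rw [hsx]

lemma bregmanF_eq_integral {p : ℝ} (hp : 1 < p) (a b : ℝ) :
    bregmanF p a b = ∫ s in a..b, (p * sgnPow s (p - 1) - p * sgnPow a (p - 1)) := by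
  have hk : (0:ℝ) < p - 1 := by linarith
  have hd : ∀ s ∈ Set.uIcc a b,
      HasDerivAt (fun x : ℝ => |x| ^ p - p * sgnPow a (p - 1) * x)
        (p * sgnPow s (p - 1) - p * sgnPow a (p - 1)) s := by
    intro s _
    have h1 := sgnPow_hasDerivAt hp s
    have h2 : HasDerivAt (fun x : ℝ => p * sgnPow a (p - 1) * x)
        (p * sgnPow a (p - 1)) s := by
      simpa using (hasDerivAt_id s).const_mul (p * sgnPow a (p - 1))
    exact h1.sub h2
  have hcont : Continuous fun s : ℝ => p * sgnPow s (p - 1) - p * sgnPow a (p - 1) :=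
    (continuous_const.mul (continuous_sgnPow hk)).sub continuous_const
  rw [intervalIntegral.integral_eq_sub_of_hasDerivAt hd (hcont.intervalIntegrable a b)]
  unfold bregmanF
  ring

lemma bregmanF_pos {p : ℝ} (hp : 1 < p) {a b : ℝ} (hab : a ≠ b) : 0 < bregmanF p a b := by
  have hk : (0:ℝ) < p - 1 := by linarith
  have hp0 : (0:ℝ) < p := by linarith
  have hmono := strictMono_sgnPow hk
  rcases hab.lt_or_gt with h | h
  · rw [bregmanF_eq_integral hp]
    apply intervalIntegral.intervalIntegral_pos_of_pos_on
      (((continuous_const.mul (continuous_sgnPow hk)).sub continuous_const).intervalIntegrable a b)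
      ?_ h
    intro x hx
    have := hmono hx.1
    simp only at this
    simp only [Pi.sub_apply, Pi.mul_apply, Pi.neg_apply]
    nlinarith
  · rw [bregmanF_eq_integral hp, intervalIntegral.integral_symm, ← intervalIntegral.integral_neg]
    apply intervalIntegral.intervalIntegral_pos_of_pos_on
      ((((continuous_const.mul (continuous_sgnPow hk)).sub continuous_const).neg).intervalIntegrable b a)
      ?_ h
    intro x hx
    have := hmono hx.2
    simp only at this
    simp only [Pi.sub_apply, Pi.mul_apply, Pi.neg_apply]
    nlinarith

lemma bregmanF_neg_neg (p a b : ℝ) : bregmanF p (-a) (-b) = bregmanF p a b := by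
  unfold bregmanF
  rw [abs_neg, abs_neg, sgnPow_neg']
  ring

lemma bregmanF_smul {p : ℝ} (hp : 1 < p) {t : ℝ} (ht : 0 < t) (a b : ℝ) :
    bregmanF p (t * a) (t * b) = t ^ p * bregmanF p a b := by
  have hk : (0:ℝ) < p - 1 := by linarith
  have h1 : ∀ x : ℝ, |t * x| ^ p = t ^ p * |x| ^ p := fun x => by
    rw [abs_mul, abs_of_pos ht, Real.mul_rpow ht.le (abs_nonneg x)]
  have hsign : Real.sign (t * a) = Real.sign a := by
    rcases lt_trichotomy a 0 with h | h | h
    · rw [Real.sign_of_neg h, Real.sign_of_neg (by exact mul_neg_of_pos_of_neg ht h)]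
    · simp [h]
    · rw [Real.sign_of_pos h, Real.sign_of_pos (by positivity)]
  have h2 : sgnPow (t * a) (p - 1) = t ^ (p - 1) * sgnPow a (p - 1) := by
    unfold sgnPow
    rw [abs_mul, abs_of_pos ht, Real.mul_rpow ht.le (abs_nonneg a), hsign]
    ring
  have h3 : t ^ p = t ^ (p - 1) * t := by
    rw [← Real.rpow_add_one ht.ne' (p - 1)]; ring_nf
  unfold bregmanF
  rw [h1, h1, h2, h3]
  ring

lemma rpow_bound_quarter {q : ℝ} {c : ℝ} (h1 : 1/4 ≤ c) (h2 : c ≤ 1) :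
    min ((1/4:ℝ) ^ q) 1 ≤ c ^ q ∧ c ^ q ≤ max ((1/4:ℝ) ^ q) 1 := by
  have hc0 : (0:ℝ) < c := by linarith
  rcases le_total 0 q with hq | hq
  · constructor
    · exact le_trans (min_le_left _ _) (Real.rpow_le_rpow (by norm_num) h1 hq)
    · refine le_trans ?_ (le_max_right _ _)
      calc c ^ q ≤ 1 ^ q := Real.rpow_le_rpow hc0.le h2 hq
        _ = 1 := Real.one_rpow q
  · constructor
    · refine le_trans (min_le_right _ _) ?_
      calc (1:ℝ) = 1 ^ q := (Real.one_rpow q).symm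
        _ ≤ c ^ q := Real.rpow_le_rpow_of_nonpos hc0 h2 hq
    · exact le_trans (Real.rpow_le_rpow_of_nonpos (by norm_num) h1 hq) (le_max_left _ _)

lemma slope_bound {p : ℝ} (hp : 1 < p) {x y : ℝ} (hx : 1/4 ≤ x) (hxy : x ≤ y) (hy : y ≤ 1) :
    p * (p-1) * min ((1/4:ℝ) ^ (p-2)) 1 * (y - x) ≤
      p * sgnPow y (p-1) - p * sgnPow x (p-1) ∧
    p * sgnPow y (p-1) - p * sgnPow x (p-1) ≤
      p * (p-1) * max ((1/4:ℝ) ^ (p-2)) 1 * (y - x) := by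
  have hk : (0:ℝ) < p - 1 := by linarith
  rcases hxy.eq_or_lt with h | h
  · subst h; simp
  · set g : ℝ → ℝ := fun s => p * s ^ (p-1) with hg
    have hgd : ∀ s ∈ Set.Ioo x y, HasDerivAt g (p * ((p-1) * s ^ (p-2))) s := by
      intro s hs
      have hs0 : s ≠ 0 := by nlinarith [hs.1]
      have : (p - 1) - 1 = p - 2 := by ring
      have hd := (Real.hasDerivAt_rpow_const (p := p - 1) (Or.inl hs0)).const_mul p
      rwa [this] at hd
    have hgc : ContinuousOn g (Set.Icc x y) := by
      intro s hs
      have hs0 : s ≠ 0 := by nlinarith [hs.1]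
      exact (continuousAt_const.mul (Real.continuousAt_rpow_const s (p-1) (Or.inl hs0))).continuousWithinAt
    obtain ⟨c, hc, hceq⟩ := exists_hasDerivAt_eq_slope g _ h hgc hgd
    have hcb := rpow_bound_quarter (q := p - 2) (c := c) (by linarith [hc.1]) (by linarith [hc.2])
    have hgy : g y - g x = (y - x) * (p * ((p-1) * c ^ (p-2))) := by
      have hyx : (0:ℝ) < y - x := sub_pos.2 h
      rw [eq_div_iff hyx.ne'] at hceq
      linear_combination -hceq
    have hsx : sgnPow x (p-1) = x ^ (p-1) := sgnPow_of_nonneg (by linarith) hk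
    have hsy : sgnPow y (p-1) = y ^ (p-1) := sgnPow_of_nonneg (by linarith) hk
    have heq : p * sgnPow y (p-1) - p * sgnPow x (p-1) = g y - g x := by
      rw [hsx, hsy, hg]
    rw [heq, hgy]
    have hfac : (0:ℝ) ≤ p * (p-1) * (y - x) :=
      mul_nonneg (mul_nonneg (by linarith) hk.le) (by linarith)
    constructor
    · calc p * (p-1) * (min ((1/4:ℝ)^(p-2)) 1) * (y-x)
          = (p*(p-1)*(y-x)) * (min ((1/4:ℝ)^(p-2)) 1) := by ring
        _ ≤ (p*(p-1)*(y-x)) * (c^(p-2)) := mul_le_mul_of_nonneg_left hcb.1 hfac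
        _ = (y-x)*(p*((p-1)*c^(p-2))) := by ring
    · calc (y-x)*(p*((p-1)*c^(p-2))) = (p*(p-1)*(y-x)) * (c^(p-2)) := by ring
        _ ≤ (p*(p-1)*(y-x)) * (max ((1/4:ℝ)^(p-2)) 1) := mul_le_mul_of_nonneg_left hcb.2 hfac
        _ = p*(p-1)*(max ((1/4:ℝ)^(p-2)) 1)*(y-x) := by ring

lemma integral_sub_linear (w u v : ℝ) :
    ∫ s in u..v, (s - w) = (v - w)^2/2 - (u - w)^2/2 := by
  have hd : ∀ s ∈ Set.uIcc u v, HasDerivAt (fun s : ℝ => (s - w)^2/2) (s - w) s := by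
    intro s _
    have h1 := ((hasDerivAt_id s).sub_const w).pow 2
    have := h1.div_const 2
    exact this.congr_deriv (by simp)
  rw [intervalIntegral.integral_eq_sub_of_hasDerivAt hd
    ((continuous_id.sub continuous_const).intervalIntegrable u v)]

lemma bregman_near {p : ℝ} (hp : 1 < p) {a b : ℝ} (ha : 1/4 ≤ a) (ha1 : a ≤ 1)
    (hb : 1/4 ≤ b) (hb1 : b ≤ 1) :
    p*(p-1)*min ((1/4:ℝ)^(p-2)) 1/2 * (b-a)^2 ≤ bregmanF p a b ∧
    bregmanF p a b ≤ p*(p-1)*max ((1/4:ℝ)^(p-2)) 1/2 * (b-a)^2 := by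
  set m := p*(p-1)*min ((1/4:ℝ)^(p-2)) 1 with hmdef
  set M := p*(p-1)*max ((1/4:ℝ)^(p-2)) 1 with hMdef
  have hk : (0:ℝ) < p - 1 := by linarith
  have hcont : Continuous fun s : ℝ => p * sgnPow s (p-1) - p * sgnPow a (p-1) :=
    (continuous_const.mul (continuous_sgnPow hk)).sub continuous_const
  rcases le_total a b with hab | hab
  · rw [bregmanF_eq_integral hp]
    have hlow : ∀ s ∈ Set.Icc a b,
        m * (s - a) ≤ p * sgnPow s (p-1) - p * sgnPow a (p-1) := fun s hs =>
      (slope_bound hp ha hs.1 (hs.2.trans hb1)).1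
    have hhigh : ∀ s ∈ Set.Icc a b,
        p * sgnPow s (p-1) - p * sgnPow a (p-1) ≤ M * (s - a) := fun s hs =>
      (slope_bound hp ha hs.1 (hs.2.trans hb1)).2
    have hints : ∀ c : ℝ, ∫ s in a..b, c * (s - a) = c/2 * (b-a)^2 := fun c => by
      rw [intervalIntegral.integral_const_mul, integral_sub_linear]; ring
    have hlin : ∀ c : ℝ, Continuous fun s : ℝ => c * (s - a) := fun c =>
      continuous_const.mul (continuous_id.sub continuous_const)
    constructor
    · have h2 := intervalIntegral.integral_mono_on hab ((hlin m).intervalIntegrable (μ := volume) a b)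
        (hcont.intervalIntegrable (μ := volume) a b) hlow
      rw [hints m] at h2
      exact h2
    · have h2 := intervalIntegral.integral_mono_on hab (hcont.intervalIntegrable (μ := volume) a b)
        ((hlin M).intervalIntegrable (μ := volume) a b) hhigh
      rw [hints M] at h2
      exact h2
  · rw [bregmanF_eq_integral hp, intervalIntegral.integral_symm,
      ← intervalIntegral.integral_neg]
    have hlow : ∀ s ∈ Set.Icc b a,
        m * (a - s) ≤ -(p * sgnPow s (p-1) - p * sgnPow a (p-1)) := fun s hs => by
      have := (slope_bound hp (hb.trans hs.1) hs.2 ha1).1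
      rw [← hmdef] at this
      linarith
    have hhigh : ∀ s ∈ Set.Icc b a,
        -(p * sgnPow s (p-1) - p * sgnPow a (p-1)) ≤ M * (a - s) := fun s hs => by
      have := (slope_bound hp (hb.trans hs.1) hs.2 ha1).2
      rw [← hMdef] at this
      linarith
    have hints : ∀ c : ℝ, ∫ s in b..a, c * (a - s) = c/2 * (b-a)^2 := fun c => by
      have he : (fun s : ℝ => c * (a - s)) = fun s => (-c) * (s - a) := by funext s; ring
      rw [he, intervalIntegral.integral_const_mul, integral_sub_linear]; ring
    have hlin : ∀ c : ℝ, Continuous fun s : ℝ => c * (a - s) := fun c =>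
      continuous_const.mul (continuous_const.sub continuous_id)
    constructor
    · have h2 := intervalIntegral.integral_mono_on hab ((hlin m).intervalIntegrable (μ := volume) b a)
        (hcont.neg.intervalIntegrable (μ := volume) b a) hlow
      rw [hints m] at h2
      exact h2
    · have h2 := intervalIntegral.integral_mono_on hab (hcont.neg.intervalIntegrable (μ := volume) b a)
        ((hlin M).intervalIntegrable (μ := volume) b a) hhigh
      rw [hints M] at h2
      exact h2

lemma continuous_bregmanF {p : ℝ} (hp : 1 < p) :
    Continuous fun x : ℝ × ℝ => bregmanF p x.1 x.2 := by
  have hk : (0:ℝ) < p - 1 := by linarith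
  have h1 : Continuous fun x : ℝ × ℝ => |x.2| ^ p :=
    (continuous_abs.comp continuous_snd).rpow_const fun x => Or.inr (by linarith)
  have h2 : Continuous fun x : ℝ × ℝ => |x.1| ^ p :=
    (continuous_abs.comp continuous_fst).rpow_const fun x => Or.inr (by linarith)
  have h3 : Continuous fun x : ℝ × ℝ => sgnPow x.1 (p - 1) :=
    (continuous_sgnPow hk).comp continuous_fst
  exact (h1.sub h2).sub ((continuous_const.mul h3).mul (continuous_snd.sub continuous_fst))

lemma bregman_far {p : ℝ} (hp : 1 < p) :
    ∃ c C : ℝ, 0 < c ∧ 0 < C ∧ ∀ a b : ℝ, |a| + |b| = 1 → 1/2 ≤ |b - a| →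
      c * (b - a)^2 ≤ bregmanF p a b ∧ bregmanF p a b ≤ C * (b - a)^2 := by
  set S : Set (ℝ × ℝ) := {x | |x.1| + |x.2| = 1 ∧ 1/2 ≤ |x.2 - x.1|} with hS
  have hcl : IsClosed S := by
    apply IsClosed.inter
    · exact isClosed_eq (((continuous_abs.comp continuous_fst).add
        (continuous_abs.comp continuous_snd))) continuous_const
    · exact isClosed_le continuous_const (continuous_abs.comp (continuous_snd.sub continuous_fst))
  have hsub : S ⊆ Metric.closedBall 0 1 := by
    intro x hx
    rw [Metric.mem_closedBall, dist_zero_right, Prod.norm_def]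
    have h1 := abs_nonneg x.1
    have h2 := abs_nonneg x.2
    rw [max_le_iff, Real.norm_eq_abs, Real.norm_eq_abs]
    constructor <;> linarith [hx.1]
  have hcomp : IsCompact S := (isCompact_closedBall (0 : ℝ × ℝ) 1).of_isClosed_subset hcl hsub
  have hne : S.Nonempty := ⟨(0, 1), by constructor <;> norm_num⟩
  obtain ⟨z, hzS, hz⟩ := hcomp.exists_isMinOn hne (continuous_bregmanF hp).continuousOn
  obtain ⟨w, hwS, hw⟩ := hcomp.exists_isMaxOn hne (continuous_bregmanF hp).continuousOn
  have hzpos : 0 < bregmanF p z.1 z.2 := by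
    apply bregmanF_pos hp
    intro hzz
    have := hzS.2
    rw [hzz] at this
    simp at this
    linarith
  have hwpos : 0 < bregmanF p w.1 w.2 := by
    apply bregmanF_pos hp
    intro hww
    have := hwS.2
    rw [hww] at this
    simp at this
    linarith
  refine ⟨bregmanF p z.1 z.2, 4 * bregmanF p w.1 w.2, hzpos, by linarith, ?_⟩
  intro a b hab hfar
  have habS : (a, b) ∈ S := ⟨hab, hfar⟩
  have hmin : bregmanF p z.1 z.2 ≤ bregmanF p a b := hz habS
  have hmax : bregmanF p a b ≤ bregmanF p w.1 w.2 := hw habS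
  have hba1 : |b - a| ≤ 1 := by
    calc |b - a| ≤ |b| + |a| := abs_sub _ _
      _ = 1 := by linarith [hab]
  have hsq1 : (b - a)^2 ≤ 1 := by nlinarith [sq_abs (b - a), abs_nonneg (b - a)]
  have hsq2 : 1/4 ≤ (b - a)^2 := by nlinarith [sq_abs (b - a)]
  constructor
  · nlinarith
  · nlinarith

lemma bregman_K {p : ℝ} (hp : 1 < p) :
    ∃ c C : ℝ, 0 < c ∧ c ≤ C ∧ ∀ a b : ℝ, |a| + |b| = 1 →
      c * (b - a)^2 ≤ bregmanF p a b ∧ bregmanF p a b ≤ C * (b - a)^2 := by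
  obtain ⟨c₁, C₁, hc₁, hC₁, hfar⟩ := bregman_far hp
  set m := p*(p-1)*min ((1/4:ℝ)^(p-2)) 1/2 with hm
  set M := p*(p-1)*max ((1/4:ℝ)^(p-2)) 1/2 with hM
  have hk : (0:ℝ) < p - 1 := by linarith
  have hmin0 : (0:ℝ) < min ((1/4:ℝ)^(p-2)) 1 :=
    lt_min (Real.rpow_pos_of_pos (by norm_num) _) one_pos
  have hm0 : 0 < m := by
    have h := mul_pos (mul_pos (by linarith : (0:ℝ) < p) hk) hmin0
    rw [hm]; linarith
  have hmM : m ≤ M := by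
    have h1 : min ((1/4:ℝ)^(p-2)) 1 ≤ max ((1/4:ℝ)^(p-2)) 1 :=
      (min_le_left _ _).trans (le_max_left _ _)
    have h2 := mul_le_mul_of_nonneg_left h1
      (by nlinarith : (0:ℝ) ≤ p * (p-1))
    rw [hm, hM]; linarith
  refine ⟨min c₁ m, max C₁ M, lt_min hc₁ hm0,
    (min_le_right _ _).trans (hmM.trans (le_max_right _ _)), ?_⟩
  intro a b hab
  rcases le_or_gt (1/2) (|b - a|) with hf | hn
  · obtain ⟨h1, h2⟩ := hfar a b hab hf
    constructor
    · exact le_trans (mul_le_mul_of_nonneg_right (min_le_left _ _) (sq_nonneg _)) h1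
    · exact le_trans h2 (mul_le_mul_of_nonneg_right (le_max_left _ _) (sq_nonneg _))
  · have hba := abs_lt.1 hn
    have key : (0 < a ∧ 0 < b) ∨ (a < 0 ∧ b < 0) := by
      rcases lt_trichotomy a 0 with ha | ha | ha
      · rcases lt_trichotomy b 0 with hb | hb | hb
        · exact Or.inr ⟨ha, hb⟩
        · exfalso; rw [hb] at hab hba; rw [abs_of_neg ha] at hab
          simp at hab; linarith [hba.1, hba.2]
        · exfalso
          rw [abs_of_neg ha, abs_of_pos hb] at hab
          linarith [hba.2]
      · exfalso; rw [ha] at hab hba; simp at hab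
        rcases abs_eq (by norm_num : (0:ℝ) ≤ 1) |>.1 hab with h | h <;> simp at hba <;> linarith [hba.1, hba.2]
      · rcases lt_trichotomy b 0 with hb | hb | hb
        · exfalso
          rw [abs_of_pos ha, abs_of_neg hb] at hab
          linarith [hba.1]
        · exfalso; rw [hb] at hab hba; rw [abs_of_pos ha] at hab
          simp at hab; linarith [hba.1, hba.2]
        · exact Or.inl ⟨ha, hb⟩
    rcases key with ⟨ha0, hb0⟩ | ⟨ha0, hb0⟩
    · have hab' : a + b = 1 := by
        rw [abs_of_pos ha0, abs_of_pos hb0] at hab; linarith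
      obtain ⟨h1, h2⟩ := bregman_near hp
        (by linarith [hba.1, hba.2] : 1/4 ≤ a) (by linarith : a ≤ 1)
        (by linarith [hba.1, hba.2] : 1/4 ≤ b) (by linarith : b ≤ 1)
      rw [← hm] at h1
      rw [← hM] at h2
      constructor
      · exact le_trans (mul_le_mul_of_nonneg_right (min_le_right _ _) (sq_nonneg _)) h1
      · exact le_trans h2 (mul_le_mul_of_nonneg_right (le_max_right _ _) (sq_nonneg _))
    · have hab' : (-a) + (-b) = 1 := by
        rw [abs_of_neg ha0, abs_of_neg hb0] at hab; linarith
      obtain ⟨h1, h2⟩ := bregman_near hp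
        (by linarith [hba.1, hba.2] : 1/4 ≤ -a) (by linarith : -a ≤ 1)
        (by linarith [hba.1, hba.2] : 1/4 ≤ -b) (by linarith : -b ≤ 1)
      rw [← hm] at h1
      rw [← hM] at h2
      rw [bregmanF_neg_neg p a b] at h1 h2
      have hsq : (-b - -a)^2 = (b - a)^2 := by ring
      rw [hsq] at h1 h2
      constructor
      · exact le_trans (mul_le_mul_of_nonneg_right (min_le_right _ _) (sq_nonneg _)) h1
      · exact le_trans h2 (mul_le_mul_of_nonneg_right (le_max_right _ _) (sq_nonneg _))


/-- Two-sided bound for the Bregman divergence: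
`F_p(a,b) ≈ (b-a)² (|b|+|a|)^{p-2}`. -/
theorem bregman_two_sided (p : ℝ) (hp : 1 < p) :
    ∃ c C : ℝ, 0 < c ∧ c ≤ C ∧ ∀ a b : ℝ, ¬(a = 0 ∧ b = 0) →
      c * (b - a) ^ 2 * (|b| + |a|) ^ (p - 2) ≤ bregmanF p a b ∧
      bregmanF p a b ≤ C * (b - a) ^ 2 * (|b| + |a|) ^ (p - 2) := by
  obtain ⟨c, C, hc, hcC, hK⟩ := bregman_K hp
  refine ⟨c, C, hc, hcC, ?_⟩
  intro a b hab
  set t := |a| + |b| with htdef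
  have ht : 0 < t := by
    rcases not_and_or.1 hab with h | h
    · exact lt_of_lt_of_le (abs_pos.2 h) (le_add_of_nonneg_right (abs_nonneg b))
    · exact lt_of_lt_of_le (abs_pos.2 h) (le_add_of_nonneg_left (abs_nonneg a))
  have h1 : |t⁻¹ * a| + |t⁻¹ * b| = 1 := by
    rw [abs_mul, abs_mul, abs_inv, abs_of_pos ht, ← mul_add, ← htdef, inv_mul_cancel₀ ht.ne']
  obtain ⟨hlo, hhi⟩ := hK _ _ h1
  have hsmul := bregmanF_smul hp (inv_pos.2 ht) a b
  have hinv : (t⁻¹ : ℝ) ^ p = (t ^ p)⁻¹ := Real.inv_rpow ht.le p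
  have htp : (0:ℝ) < t ^ p := Real.rpow_pos_of_pos ht p
  have hsq : (t⁻¹ * b - t⁻¹ * a)^2 = (t⁻¹)^2 * (b - a)^2 := by ring
  have hrel : t ^ p * ((t:ℝ)⁻¹)^2 = t ^ (p - 2) := by
    rw [Real.rpow_sub ht p 2, show (2:ℝ) = ((2:ℕ):ℝ) by norm_num, Real.rpow_natCast]
    field_simp
  have hcomm : |b| + |a| = t := by rw [htdef]; ring
  rw [hcomm]
  constructor
  · have h2 : c * ((t⁻¹)^2 * (b-a)^2) ≤ (t^p)⁻¹ * bregmanF p a b := by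
      rw [← hsq, ← hinv, ← hsmul]; exact hlo
    have h3 := mul_le_mul_of_nonneg_left h2 htp.le
    calc c * (b-a)^2 * t^(p-2) = t^p * (c * ((t⁻¹)^2 * (b-a)^2)) := by rw [← hrel]; ring
      _ ≤ t^p * ((t^p)⁻¹ * bregmanF p a b) := h3
      _ = bregmanF p a b := by field_simp
  · have h2 : (t^p)⁻¹ * bregmanF p a b ≤ C * ((t⁻¹)^2 * (b-a)^2) := by
      rw [← hsq, ← hinv, ← hsmul]; exact hhi
    have h3 := mul_le_mul_of_nonneg_left h2 htp.le
    calc bregmanF p a b = t^p * ((t^p)⁻¹ * bregmanF p a b) := by field_simp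
      _ ≤ t^p * (C * ((t⁻¹)^2 * (b-a)^2)) := h3
      _ = C * (b-a)^2 * t^(p-2) := by rw [← hrel]; ring
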